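/- Let m ≥ 1, let X_1 be uniform on {1,…,2m}, let U_1 be uniform on (0,1) independent of X_1, and set h_1(X_1, U_1) = ((X_1 − 1)/(2m))(1 − U_1) + ((2m − X_1)/(2m)) U_1 + 1{X_1 even}/(2m) − 1/2. Then ζ_1² := E[(h_1(X_1, U_1))²] = (m² + 2)/(36 m²). -/

import Mathlib

open MeasureTheory ProbabilityTheory Finset Filter

/-- The uniform probability measure on a finite type. -/
noncomputable def uniformM (α : Type*) [Fintype α] [MeasurableSpace α] : Measure α :=
  ((Fintype.card α : ENNReal))⁻¹ • Measure.count

/-- The pile label (in `{1, …, 2m}`) of card `i` under the pile assignment `w`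
(pile indices in `Fin (2*m)` are 0-based, so pile `k` carries label `k + 1`).
Under the uniform measure on words, `fun w => Xval w i` are i.i.d. uniform on `{1, …, 2m}`. -/
def Xval {m n : ℕ} (w : Fin n → Fin (2*m)) (i : Fin n) : ℕ := (w i : ℕ) + 1

/-- Sorting key of card `i` in an `m`-shelf shuffle with pile assignment `w`:
cards are ordered first by pile label; within an odd-labeled pile they keep their
increasing order, and within an even-labeled pile their order is reversed. -/
noncomputable def shelfKey {m n : ℕ} (w : Fin n → Fin (2*m)) (i : Fin n) :
    Lex (Fin (2*m) × ℤ) :=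
  toLex (w i, if Even (Xval w i) then -(i : ℤ) else (i : ℤ))

/-- The permutation of `{1, …, n}` (0-based: of `Fin n`) produced by an `m`-shelf shuffle
with pile assignment `w`: position `p` of the shuffled deck holds card `shelfPerm w p`. -/
noncomputable def shelfPerm {m n : ℕ} (w : Fin n → Fin (2*m)) : Equiv.Perm (Fin n) :=
  Tuple.sort (shelfKey w)

/-- The number of inversions of a permutation: pairs `i < j` with `π i > π j`. -/
def invCount {n : ℕ} (π : Equiv.Perm (Fin n)) : ℕ :=
  ((Finset.univ : Finset (Fin n × Fin n)).filter
    (fun p => p.1 < p.2 ∧ π p.2 < π p.1)).card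

/-- `I_{n,m}`: the number of inversions after an `m`-shelf shuffle of `n` cards,
as a random variable on the space of pile-assignment words. -/
noncomputable def shelfInv (m n : ℕ) (w : Fin n → Fin (2*m)) : ℕ := invCount (shelfPerm w)

/-- The uniform probability measure on `(0,1)`. -/
noncomputable def unif01 : Measure ℝ := (volume : Measure ℝ).restrict (Set.Ioo 0 1)

/-- The law of `Z_i = (X_i, U_i)`: `X_i` uniform on `{1,…,2m}` (0-based pile index, value
`x` carries label `x+1`), `U_i` uniform on `(0,1)`, independent. -/
noncomputable def zMeasure (m : ℕ) : Measure (Fin (2*m) × ℝ) :=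
  (uniformM (Fin (2*m))).prod unif01

/-- The symmetric kernel
`h((x₁,u₁),(x₂,u₂)) = 1{x₁>x₂}1{u₁<u₂} + 1{x₁<x₂}1{u₁>u₂} + 1{x₁=x₂, x₁ even} − 1/2`,
where the pile value in `Fin (2*m)` encodes the label `x = (·) + 1 ∈ {1,…,2m}`. -/
noncomputable def hker (m : ℕ) (z1 z2 : Fin (2*m) × ℝ) : ℝ :=
  (if (z2.1 : ℕ) < (z1.1 : ℕ) then 1 else 0) * (if z1.2 < z2.2 then 1 else 0)
  + (if (z1.1 : ℕ) < (z2.1 : ℕ) then 1 else 0) * (if z2.2 < z1.2 then 1 else 0)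
  + (if z1.1 = z2.1 ∧ Even ((z1.1 : ℕ) + 1) then 1 else 0) - 1/2

/-- `h₁(X₁,U₁) = ((X₁−1)/(2m))(1−U₁) + ((2m−X₁)/(2m))U₁ + 1{X₁ even}/(2m) − 1/2`,
where the pile value `z.1 : Fin (2*m)` encodes the label `X₁ = z.1 + 1 ∈ {1,…,2m}`
and `U₁ = z.2`. -/
noncomputable def h1 (m : ℕ) (z : Fin (2*m) × ℝ) : ℝ :=
  ((((z.1 : ℕ) : ℝ) + 1 - 1) / (2*m)) * (1 - z.2)
    + ((2*m - (((z.1 : ℕ) : ℝ) + 1)) / (2*m)) * z.2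
    + (if Even ((z.1 : ℕ) + 1) then 1 else 0) / (2*m) - 1/2

/-!
For a fixed pile index `x`, `h₁(x, u) = A x + B x · u` is affine in `u`, so integrating out
`U₁ ~ Unif(0,1)` leaves `A² + A B + B²/3`. Only the indicator `1{X₁ even}` breaks the polynomial
dependence on `x`; grouping the labels in consecutive pairs `(2k+1, 2k+2)` removes it and turns
the average over `X₁` into a sum of a quadratic in `k`, which is summed in closed form.
-/

section Uniform

variable {α : Type*} [Fintype α] [MeasurableSpace α]

instance : IsFiniteMeasure (uniformM α) := by
  constructor
  simpa [uniformM] using (ENNReal.inv_mul_le_one (Fintype.card α)).trans_lt ENNReal.one_lt_top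

lemma measureReal_uniformM_singleton [MeasurableSingletonClass α] (a : α) :
    (uniformM α).real {a} = (Fintype.card α : ℝ)⁻¹ := by
  simp [uniformM, Measure.real]

theorem integral_uniformM_prod [MeasurableSingletonClass α] {β E : Type*} [MeasurableSpace β]
    [NormedAddCommGroup E] [NormedSpace ℝ E] [CompleteSpace E]
    {ν : Measure β} [IsFiniteMeasure ν] {f : α × β → E}
    (hfm : AEStronglyMeasurable f ((uniformM α).prod ν))
    (hf : ∀ a, Integrable (fun b => f (a, b)) ν) :
    ∫ z, f z ∂(uniformM α).prod ν = (Fintype.card α : ℝ)⁻¹ • ∑ a, ∫ b, f (a, b) ∂ν := by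
  have hint : Integrable f ((uniformM α).prod ν) :=
    (integrable_prod_iff hfm).2 ⟨ae_of_all _ hf, .of_finite⟩
  rw [integral_prod f hint, integral_fintype .of_finite, Finset.smul_sum]
  simp [measureReal_uniformM_singleton]

end Uniform

instance : IsProbabilityMeasure unif01 := by
  constructor
  simp [unif01]

lemma Continuous.integrable_unif01 {f : ℝ → ℝ} (hf : Continuous f) : Integrable f unif01 :=
  hf.integrableOn_Icc.mono_set Set.Ioo_subset_Icc_self

lemma integral_unif01_sq_affine (a b : ℝ) :
    ∫ u, (a + b * u) ^ 2 ∂unif01 = a ^ 2 + a * b + b ^ 2 / 3 := by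
  rw [unif01, ← integral_Ioc_eq_integral_Ioo, ← intervalIntegral.integral_of_le zero_le_one]
  have hexpand :
      (fun u : ℝ => (a + b * u) ^ 2) = fun u => a ^ 2 + u * (2 * a * b) + b ^ 2 * u ^ 2 := by
    ext u; ring
  have hcont {g : ℝ → ℝ} (hg : Continuous g) : IntervalIntegrable g volume 0 1 :=
    hg.intervalIntegrable 0 1
  rw [hexpand, intervalIntegral.integral_add (hcont (by fun_prop)) (hcont (by fun_prop)),
    intervalIntegral.integral_add (hcont (by fun_prop)) (hcont (by fun_prop))]
  simp [intervalIntegral.integral_mul_const, intervalIntegral.integral_const_mul]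
  ring

lemma sum_range_two_mul {M : Type*} [AddCommMonoid M] (f : ℕ → M) (n : ℕ) :
    ∑ x ∈ range (2 * n), f x = ∑ k ∈ range n, (f (2 * k) + f (2 * k + 1)) := by
  induction n with
  | zero => simp
  | succ n ih =>
    rw [Nat.mul_succ, sum_range_succ, sum_range_succ, ih, sum_range_succ, add_assoc]

lemma sum_range_quadratic (a b c : ℝ) (n : ℕ) :
    ∑ k ∈ range n, (a * (k : ℝ) ^ 2 + b * k + c)
      = a * (n * (n - 1) * (2 * n - 1) / 6) + b * (n * (n - 1) / 2) + c * n := by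
  induction n with
  | zero => simp
  | succ n ih =>
    rw [sum_range_succ, ih]
    push_cast
    ring

noncomputable def h1Const (m X : ℕ) : ℝ :=
  (X + if Even (X + 1) then 1 else 0 : ℝ) / (2 * m) - 1 / 2

noncomputable def h1Slope (m X : ℕ) : ℝ :=
  (2 * m - 1 - 2 * X : ℝ) / (2 * m)

/-- The conditional second moment `E[h₁(X₁, U₁)² | X₁ = X + 1]`. -/
noncomputable def h1SectionMoment (m X : ℕ) : ℝ :=
  h1Const m X ^ 2 + h1Const m X * h1Slope m X + h1Slope m X ^ 2 / 3

lemma h1_eq_affine (m : ℕ) (x : Fin (2 * m)) (u : ℝ) :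
    h1 m (x, u) = h1Const m x + h1Slope m x * u := by
  simp only [h1, h1Const, h1Slope]
  ring

lemma integral_h1_sq_section (m : ℕ) (x : Fin (2 * m)) :
    ∫ u, h1 m (x, u) ^ 2 ∂unif01 = h1SectionMoment m x := by
  simp_rw [h1_eq_affine, integral_unif01_sq_affine, h1SectionMoment]

lemma sum_range_h1SectionMoment {m : ℕ} (hm : m ≠ 0) :
    ∑ X ∈ range (2 * m), h1SectionMoment m X = ((m : ℝ) ^ 2 + 2) / (18 * m) := by
  have hpair (k : ℕ) : h1SectionMoment m (2 * k) + h1SectionMoment m (2 * k + 1)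
      = 2 / (3 * m ^ 2) * (k : ℝ) ^ 2 + (2 - 2 * m) / (3 * m ^ 2) * k
          + (m ^ 2 - 2 * m + 2) / (6 * m ^ 2) := by
    have hodd : ¬ Even (2 * k + 1) := Nat.not_even_two_mul_add_one k
    have heven : Even (2 * k + 1 + 1) := ⟨k + 1, by ring⟩
    simp only [h1SectionMoment, h1Const, h1Slope, hodd, heven, if_true, if_false]
    push_cast
    field_simp
    ring
  rw [sum_range_two_mul, sum_congr rfl fun k _ => hpair k, sum_range_quadratic]
  field_simp
  ring

/-- For `m ≥ 1`, with `X_1` uniform on `{1,…,2m}` and `U_1` uniform on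
`(0,1)` independent of `X_1`, `ζ₁² := E[(h₁(X₁,U₁))²] = (m² + 2)/(36 m²)`. -/
theorem h1_second_moment (m : ℕ) (hm : 1 ≤ m) :
    ∫ z, (h1 m z)^2 ∂(zMeasure m) = (m^2 + 2) / (36 * m^2) := by
  have hm0 : (m : ℝ) ≠ 0 := Nat.cast_ne_zero.2 (by omega)
  have hmeas : Measurable fun z : Fin (2 * m) × ℝ => h1 m z ^ 2 :=
    measurable_from_prod_countable_right fun x => by simp only [h1_eq_affine]; fun_prop
  have hsection (x : Fin (2 * m)) : Integrable (fun u => h1 m (x, u) ^ 2) unif01 :=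
    Continuous.integrable_unif01 (by simp only [h1_eq_affine]; fun_prop)
  rw [zMeasure, integral_uniformM_prod hmeas.aestronglyMeasurable hsection]
  simp_rw [integral_h1_sq_section]
  rw [Fin.sum_univ_eq_sum_range (h1SectionMoment m), sum_range_h1SectionMoment (by omega),
    Fintype.card_fin, smul_eq_mul, Nat.cast_mul, Nat.cast_ofNat]
  field_simp
  ring
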